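/- arXiv:2004.06514 — 2 statements merged into one kernel-verified Lean document; each statement's English description precedes it below -/
import Mathlib

section
/- Suppose f_n, f : [0,τ] → ℝ are measurable, f_n(u) → f(u) in probability for each u ∈ [0,τ], and there is an integrable function k : [0,τ] → ℝ with |f_n(u)| ≤ k(u) and |f(u)| ≤ k(u) almost surely for all u, n. Then sup_{t∈[0,τ]} |∫₀ᵗ f_n(u) du − ∫₀ᵗ f(u) du| → 0 in probability (dominated convergence for convergence in probability, uniformly in the upper limit). -/
/-!
For every `t ∈ [0, τ]`, `|∫₀ᵗ fₙ - ∫₀ᵗ g| ≤ ∫₀^τ |fₙ - g|`, so it suffices to show that the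
`L¹(0, τ)` distance `Yₙ = ∫₀^τ |fₙ - g|` tends to zero in probability, and by Markov's inequality
it suffices that `E Yₙ → 0`. By Tonelli, `E Yₙ = ∫₀^τ E |fₙ(u) - g(u)| du`. For fixed `u` the
variables `fₙ(u) - g(u)` are bounded by `2 k(u)` and tend to zero in probability, hence in `L¹`;
dominated convergence in `u`, with dominating function `2 k`, gives `E Yₙ → 0`.
-/

open MeasureTheory ProbabilityTheory Filter Set
open scoped ENNReal Topology

section Probability

variable {Ω : Type*} {m0 : MeasurableSpace Ω} {μ : Measure Ω}

lemma tendsto_measure_le_of_tendsto_lintegral {Y : ℕ → Ω → ℝ≥0∞}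
    (hY : ∀ n, AEMeasurable (Y n) μ) (h : Tendsto (fun n => ∫⁻ ω, Y n ω ∂μ) atTop (𝓝 0))
    {c : ℝ≥0∞} (hc₀ : c ≠ 0) (hc : c ≠ ∞) :
    Tendsto (fun n => μ {ω | c ≤ Y n ω}) atTop (𝓝 0) := by
  have hdiv : Tendsto (fun n => (∫⁻ ω, Y n ω ∂μ) / c) atTop (𝓝 0) := by
    simpa using ENNReal.Tendsto.div_const h (.inr hc₀)
  exact tendsto_of_tendsto_of_tendsto_of_le_of_le tendsto_const_nhds hdiv (fun _ => zero_le)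
    fun n => meas_ge_le_lintegral_div (hY n) hc₀ hc

variable [IsProbabilityMeasure μ]

lemma lintegral_enorm_le_ofReal_of_abs_le {X : Ω → ℝ} {c : ℝ}
    (hc : ∀ᵐ ω ∂μ, |X ω| ≤ c) : ∫⁻ ω, ‖X ω‖ₑ ∂μ ≤ ENNReal.ofReal c := by
  calc ∫⁻ ω, ‖X ω‖ₑ ∂μ ≤ ∫⁻ _, ENNReal.ofReal c ∂μ := by
        refine lintegral_mono_ae ?_
        filter_upwards [hc] with ω hω
        rw [Real.enorm_eq_ofReal_abs]
        exact ENNReal.ofReal_le_ofReal hω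
    _ = ENNReal.ofReal c := by simp

lemma lintegral_enorm_le_add_mul_measure_gt {X : Ω → ℝ} {c : ℝ}
    (hc : ∀ᵐ ω ∂μ, |X ω| ≤ c) (δ : ℝ) :
    ∫⁻ ω, ‖X ω‖ₑ ∂μ ≤ ENNReal.ofReal δ + ENNReal.ofReal c * μ {ω | δ < |X ω|} := by
  have hpt : ∀ᵐ ω ∂μ, ‖X ω‖ₑ ≤
      ENNReal.ofReal δ + {ω | δ < |X ω|}.indicator (fun _ => ENNReal.ofReal c) ω := by
    filter_upwards [hc] with ω hω
    rw [Real.enorm_eq_ofReal_abs]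
    by_cases hδ : δ < |X ω|
    · rw [indicator_of_mem (show ω ∈ {ω | δ < |X ω|} from hδ)]
      exact le_add_left (ENNReal.ofReal_le_ofReal hω)
    · exact le_add_right (ENNReal.ofReal_le_ofReal (not_lt.mp hδ))
  calc ∫⁻ ω, ‖X ω‖ₑ ∂μ
      ≤ ∫⁻ ω, ENNReal.ofReal δ + {ω | δ < |X ω|}.indicator (fun _ => ENNReal.ofReal c) ω ∂μ :=
        lintegral_mono_ae hpt
    _ ≤ ENNReal.ofReal δ + ENNReal.ofReal c * μ {ω | δ < |X ω|} := by
        rw [lintegral_add_left measurable_const, lintegral_const, measure_univ, mul_one]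
        gcongr
        exact lintegral_indicator_const_le _ _

lemma tendsto_lintegral_enorm_of_tendsto_measure {X : ℕ → Ω → ℝ}
    {c : ℝ} (hc : ∀ n, ∀ᵐ ω ∂μ, |X n ω| ≤ c)
    (hX : ∀ ε > (0 : ℝ), Tendsto (fun n => μ {ω | ε < |X n ω|}) atTop (𝓝 0)) :
    Tendsto (fun n => ∫⁻ ω, ‖X n ω‖ₑ ∂μ) atTop (𝓝 0) := by
  refine ENNReal.tendsto_nhds_zero.mpr fun ε hε => ?_
  obtain ⟨δ, -, hδ_pos, hδε⟩ := ENNReal.lt_iff_exists_real_btwn.mp hε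
  have hbound : Tendsto (fun n => ENNReal.ofReal δ + ENNReal.ofReal c * μ {ω | δ < |X n ω|})
      atTop (𝓝 (ENNReal.ofReal δ)) := by
    simpa using tendsto_const_nhds.add
      (ENNReal.Tendsto.const_mul (hX δ (ENNReal.ofReal_pos.mp hδ_pos)) (.inr ENNReal.ofReal_ne_top))
  filter_upwards [hbound.eventually (gt_mem_nhds hδε)] with n hn
  exact ((lintegral_enorm_le_add_mul_measure_gt (hc n) δ).trans_lt hn).le

variable {α : Type*} [MeasurableSpace α] {ν : Measure α} [SFinite ν]

lemma ae_integrable_of_abs_le {F : α → Ω → ℝ} (hF : Measurable (Function.uncurry F))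
    {k : α → ℝ} (hk : Integrable k ν) (hbound : ∀ᵐ u ∂ν, ∀ᵐ ω ∂μ, |F u ω| ≤ k u) :
    ∀ᵐ ω ∂μ, Integrable (fun u => F u ω) ν := by
  have hmeas : Measurable fun p : Ω × α => ‖F p.2 p.1‖ₑ := (hF.comp measurable_swap).enorm
  have hfin : ∫⁻ ω, ∫⁻ u, ‖F u ω‖ₑ ∂ν ∂μ ≠ ∞ := by
    rw [lintegral_lintegral_swap hmeas.aemeasurable]
    refine ne_top_of_le_ne_top hk.lintegral_lt_top.ne (lintegral_mono_ae ?_)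
    filter_upwards [hbound] with u hu
    exact lintegral_enorm_le_ofReal_of_abs_le hu
  filter_upwards [ae_lt_top' hmeas.lintegral_prod_right'.aemeasurable hfin] with ω hω
  exact ⟨(hF.comp (measurable_id.prodMk measurable_const)).aestronglyMeasurable, hω⟩

lemma tendsto_lintegral_lintegral_enorm_of_tendsto_measure {X : ℕ → α → Ω → ℝ}
    (hX : ∀ n, Measurable (Function.uncurry (X n))) {k : α → ℝ} (hk : Integrable k ν)
    (hbound : ∀ n, ∀ᵐ u ∂ν, ∀ᵐ ω ∂μ, |X n u ω| ≤ k u)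
    (hconv : ∀ᵐ u ∂ν, ∀ ε > (0 : ℝ), Tendsto (fun n => μ {ω | ε < |X n u ω|}) atTop (𝓝 0)) :
    Tendsto (fun n => ∫⁻ ω, ∫⁻ u, ‖X n u ω‖ₑ ∂ν ∂μ) atTop (𝓝 0) := by
  have hmeas : ∀ n, Measurable fun p : α × Ω => ‖X n p.1 p.2‖ₑ := fun n => (hX n).enorm
  have hswap : ∀ n, ∫⁻ ω, ∫⁻ u, ‖X n u ω‖ₑ ∂ν ∂μ = ∫⁻ u, ∫⁻ ω, ‖X n u ω‖ₑ ∂μ ∂ν := fun n =>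
    lintegral_lintegral_swap (f := fun ω u => ‖X n u ω‖ₑ)
      ((hmeas n).comp measurable_swap).aemeasurable
  simp_rw [hswap]
  have hdom := tendsto_lintegral_of_dominated_convergence (μ := ν) (f := fun _ => 0)
    (fun u => ENNReal.ofReal (k u)) (fun n => (hmeas n).lintegral_prod_right' (ν := μ)) ?_
    hk.lintegral_lt_top.ne ?_
  · simpa using hdom
  · intro n
    filter_upwards [hbound n] with u hu
    exact lintegral_enorm_le_ofReal_of_abs_le hu
  · filter_upwards [hconv, ae_all_iff.mpr hbound] with u hu_conv hu_bound
    exact tendsto_lintegral_enorm_of_tendsto_measure hu_bound hu_conv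

end Probability

lemma enorm_intervalIntegral_sub_le_setLIntegral {φ ψ : ℝ → ℝ} {a b t : ℝ}
    (hφ : IntegrableOn φ (Icc a b)) (hψ : IntegrableOn ψ (Icc a b)) (ht : t ∈ Icc a b) :
    ‖(∫ u in a..t, φ u) - ∫ u in a..t, ψ u‖ₑ ≤ ∫⁻ u in Icc a b, ‖φ u - ψ u‖ₑ := by
  have hsub : Ioc a t ⊆ Icc a b := Ioc_subset_Icc_self.trans (Icc_subset_Icc_right ht.2)
  rw [← intervalIntegral.integral_sub
      ((intervalIntegrable_iff_integrableOn_Ioc_of_le ht.1).mpr (hφ.mono_set hsub))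
      ((intervalIntegrable_iff_integrableOn_Ioc_of_le ht.1).mpr (hψ.mono_set hsub)),
    intervalIntegral.integral_of_le ht.1]
  exact (enorm_integral_le_lintegral_enorm _).trans (lintegral_mono_set hsub)

theorem gill_dominated_convergence_in_probability_general
    {Ω : Type*} {m0 : MeasurableSpace Ω} {μ : Measure Ω} [IsProbabilityMeasure μ]
    (τ : ℝ)
    (f : ℕ → ℝ → Ω → ℝ) (g : ℝ → Ω → ℝ) (k : ℝ → ℝ)
    (hfmeas : ∀ n, Measurable (Function.uncurry (f n)))
    (hgmeas : Measurable (Function.uncurry g))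
    (hkint : IntegrableOn k (Set.Icc 0 τ))
    (hbound : ∀ n : ℕ, ∀ u ∈ Set.Icc (0:ℝ) τ,
      ∀ᵐ ω ∂μ, |f n u ω| ≤ k u ∧ |g u ω| ≤ k u)
    (hptwise : ∀ u ∈ Set.Icc (0:ℝ) τ, ∀ ε > (0:ℝ),
      Tendsto (fun n => μ {ω | ε < |f n u ω - g u ω|}) atTop (nhds 0)) :
    ∀ ε > (0:ℝ),
      Tendsto (fun n => μ {ω | ∃ t ∈ Set.Icc (0:ℝ) τ,
          ε < |(∫ u in (0:ℝ)..t, f n u ω) - ∫ u in (0:ℝ)..t, g u ω|})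
        atTop (nhds 0) := by
  intro ε hε
  have hf_int : ∀ n, ∀ᵐ ω ∂μ, IntegrableOn (fun u => f n u ω) (Icc 0 τ) := fun n =>
    ae_integrable_of_abs_le (hfmeas n) hkint <| ae_restrict_of_forall_mem measurableSet_Icc
      fun u hu => (hbound n u hu).mono fun _ h => h.1
  have hg_int : ∀ᵐ ω ∂μ, IntegrableOn (fun u => g u ω) (Icc 0 τ) :=
    ae_integrable_of_abs_le hgmeas hkint <| ae_restrict_of_forall_mem measurableSet_Icc
      fun u hu => (hbound 0 u hu).mono fun _ h => h.2
  have hL1 : Tendsto (fun n => ∫⁻ ω, (∫⁻ u in Icc 0 τ, ‖f n u ω - g u ω‖ₑ) ∂μ) atTop (𝓝 0) :=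
    tendsto_lintegral_lintegral_enorm_of_tendsto_measure (fun n => (hfmeas n).sub hgmeas)
      (hkint.const_mul 2)
      (fun n => ae_restrict_of_forall_mem measurableSet_Icc fun u hu =>
        (hbound n u hu).mono fun ω h =>
          show |f n u ω - g u ω| ≤ 2 * k u by linarith [abs_sub (f n u ω) (g u ω), h.1, h.2])
      (ae_restrict_of_forall_mem measurableSet_Icc hptwise)
  refine tendsto_of_tendsto_of_tendsto_of_le_of_le tendsto_const_nhds
    (tendsto_measure_le_of_tendsto_lintegral
      (fun n => (((hfmeas n).sub hgmeas).comp measurable_swap).enorm.lintegral_prod_right'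
        |>.aemeasurable) hL1 (ENNReal.ofReal_pos.mpr hε).ne' ENNReal.ofReal_ne_top)
    (fun _ => zero_le) fun n => measure_mono_ae ?_
  filter_upwards [hf_int n, hg_int] with ω hf hg ⟨t, ht, hεt⟩
  calc ENNReal.ofReal ε ≤ ‖(∫ u in (0:ℝ)..t, f n u ω) - ∫ u in (0:ℝ)..t, g u ω‖ₑ := by
        rw [Real.enorm_eq_ofReal_abs]
        exact ENNReal.ofReal_le_ofReal hεt.le
    _ ≤ _ := enorm_intervalIntegral_sub_le_setLIntegral hf hg ht

/-- Gill's dominated convergence theorem for convergence in probability, uniformly in the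
upper integration limit: if `f n u → g u` in probability for each `u ∈ [0,τ]` and all the
processes are dominated by a deterministic integrable function `k`, then
`sup_{t∈[0,τ]} |∫₀ᵗ f n − ∫₀ᵗ g| → 0` in probability. -/
theorem gill_dominated_convergence_in_probability
    {Ω : Type*} {m0 : MeasurableSpace Ω} {μ : Measure Ω} [IsProbabilityMeasure μ]
    (τ : ℝ) (hτ : 0 ≤ τ)
    (f : ℕ → ℝ → Ω → ℝ) (g : ℝ → Ω → ℝ) (k : ℝ → ℝ)
    (hfmeas : ∀ n, Measurable (Function.uncurry (f n)))
    (hgmeas : Measurable (Function.uncurry g))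
    (hkint : IntegrableOn k (Set.Icc 0 τ))
    (hbound : ∀ n : ℕ, ∀ u ∈ Set.Icc (0:ℝ) τ,
      ∀ᵐ ω ∂μ, |f n u ω| ≤ k u ∧ |g u ω| ≤ k u)
    (hptwise : ∀ u ∈ Set.Icc (0:ℝ) τ, ∀ ε > (0:ℝ),
      Tendsto (fun n => μ {ω | ε < |f n u ω - g u ω|}) atTop (nhds 0)) :
    ∀ ε > (0:ℝ),
      Tendsto (fun n => μ {ω | ∃ t ∈ Set.Icc (0:ℝ) τ,
          ε < |(∫ u in (0:ℝ)..t, f n u ω) - ∫ u in (0:ℝ)..t, g u ω|})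
        atTop (nhds 0) :=
  gill_dominated_convergence_in_probability_general (m0 := m0) τ f g k hfmeas hgmeas hkint hbound
    hptwise
end

section
/- Let X be a multi-state trajectory, L a left-truncation time and C a censoring time with (L,C) independent of X, and let Q denote the conditional law given study entry. If the state l is transient and u > 0, then Q(dN(u)=1 | Y(u)=1) = P(X(u+du)=m | X(u−)=l), i.e., the conditional rate of an observed l→m transition given being under observation and in state l at time u equals the partly conditional transition rate α_{lm}(u)du. -/
/-! The event `{Xm u = l}` is determined by the process `X` along a sequence of times increasing
to `u`, while the observation window `{L < u, u + h ≤ C}` is determined by `(L, C)`. Independence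
therefore factors both the numerator and the denominator of the observed rate, and their ratio is
the partly conditional rate times `μ{L < u, u + h ≤ C} / μ{L < u, u ≤ C}`, which tends to `1` as
`h ↓ 0` because `C` has no atom at `u`. -/

open MeasureTheory ProbabilityTheory Filter Set

open Topology

lemma measurable_iSup_comap {ι Ω β : Type*} [mβ : MeasurableSpace β] (X : ι → Ω → β) (i : ι) :
    Measurable[⨆ j, mβ.comap (X j)] (X i) :=
  measurable_iff_comap_le.2 (le_iSup (fun j => mβ.comap (X j)) i)

lemma measurable_of_forall_eventually_eq {Ω β : Type*} {mΩ : MeasurableSpace Ω}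
    [MeasurableSpace β] {f : ℕ → Ω → β} {g : Ω → β} (hf : ∀ n, Measurable (f n))
    (hfg : ∀ ω, ∀ᶠ n in atTop, f n ω = g ω) : Measurable g := by
  intro s hs
  have hpre : g ⁻¹' s = liminf (fun n => f n ⁻¹' s) atTop := by
    ext ω
    rw [mem_liminf_iff_eventually_mem]
    refine ⟨fun hω => (hfg ω).mono fun n hn => by simpa [mem_preimage, hn] using hω,
      fun hω => ?_⟩
    obtain ⟨n, hn, hfn⟩ := (hω.and (hfg ω)).exists
    simpa [mem_preimage, hfn] using hn
  rw [hpre]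
  exact MeasurableSet.measurableSet_liminf fun n => hf n hs

lemma measurable_iSup_comap_of_eventually_eq_nhdsLT {Ω β : Type*} [mβ : MeasurableSpace β]
    {X : ℝ → Ω → β} {Y : Ω → β} {u : ℝ} (hY : ∀ ω, ∀ᶠ v in 𝓝[<] u, X v ω = Y ω) :
    Measurable[⨆ v, mβ.comap (X v)] Y := by
  have htimes : Tendsto (fun n : ℕ => u - 1 / ((n : ℝ) + 1)) atTop (𝓝[<] u) := by
    refine tendsto_nhdsWithin_of_tendsto_nhds_of_eventually_within _ ?_
      (Eventually.of_forall fun n => ?_)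
    · simpa using (tendsto_const_nhds (x := u)).sub tendsto_one_div_add_atTop_nhds_zero_nat
    · simp only [mem_Iio, sub_lt_self_iff]
      positivity
  exact measurable_of_forall_eventually_eq (fun n => measurable_iSup_comap X _)
    (fun ω => htimes.eventually (hY ω))

lemma tendsto_measure_inter_add_le_nhdsGT {Ω : Type*} {mΩ : MeasurableSpace Ω}
    (μ : Measure Ω) (A : Set Ω) {C : Ω → ℝ} {u : ℝ} (hC : μ {ω | C ω = u} = 0) :
    Tendsto (fun h => μ (A ∩ {ω | u + h ≤ C ω})) (𝓝[>] 0)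
      (𝓝 (μ (A ∩ {ω | u ≤ C ω}))) := by
  set s : Ioi (0 : ℝ) → Set Ω := fun h => A ∩ {ω | u + h ≤ C ω}
  have hs : Antitone s := fun h h' hle ω hω =>
    ⟨hω.1, le_trans (add_le_add_right (Subtype.coe_le_coe.2 hle) u) hω.2⟩
  have hunion : ⋃ h, s h = (A ∩ {ω | u ≤ C ω}) \ {ω | C ω = u} := by
    ext ω
    simp only [s, mem_iUnion, Set.mem_sdiff, mem_inter_iff, mem_ofPred_eq, Subtype.exists,
      mem_Ioi]
    constructor
    · rintro ⟨h, hh, hA, hle⟩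
      exact ⟨⟨hA, by linarith⟩, by linarith⟩
    · rintro ⟨⟨hA, hle⟩, hne⟩
      exact ⟨C ω - u, by grind, hA, by linarith⟩
  have : (atBot : Filter (Ioi (0 : ℝ))).IsCountablyGenerated := by
    rw [← comap_coe_Ioi_nhdsGT]
    infer_instance
  rw [← map_coe_Ioi_atBot, tendsto_map'_iff, ← measure_sdiff_null hC, ← hunion]
  exact tendsto_measure_iUnion_atBot hs

lemma tendsto_measure_inter_add_le_div_nhdsGT {Ω : Type*} {mΩ : MeasurableSpace Ω}
    (μ : Measure Ω) [IsFiniteMeasure μ] (A : Set Ω) {C : Ω → ℝ} {u : ℝ}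
    (hC : μ {ω | C ω = u} = 0) (hA : μ (A ∩ {ω | u ≤ C ω}) ≠ 0) :
    Tendsto (fun h => (μ (A ∩ {ω | u + h ≤ C ω})).toReal / (μ (A ∩ {ω | u ≤ C ω})).toReal)
      (𝓝[>] 0) (𝓝 1) := by
  rw [← div_self (ENNReal.toReal_ne_zero.2 ⟨hA, measure_ne_top μ _⟩)]
  exact ((ENNReal.tendsto_toReal (measure_ne_top μ _)).comp
    (tendsto_measure_inter_add_le_nhdsGT μ A hC)).div_const _

theorem observed_rate_eq_partly_conditional_rate_general
    {Ω : Type*} {m0 : MeasurableSpace Ω} (μ : Measure Ω) [IsProbabilityMeasure μ]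
    {S : ℕ} (X Xm : ℝ → Ω → Fin (S + 1))
    (L C : Ω → ℝ)
    (u : ℝ)
    (l m : Fin (S + 1))
    -- Xm u is the left limit of v ↦ X v at u:
    (hXm : ∀ ω, ∃ ε > (0:ℝ), ∀ v ∈ Set.Ioo (u - ε) u, X v ω = Xm u ω)
    -- (L, C) is independent of the multi-state process:
    (hindep : Indep (MeasurableSpace.comap (fun ω => (L ω, C ω)) inferInstance)
        (⨆ v : ℝ, MeasurableSpace.comap (X v) inferInstance) μ)
    (hpos : μ {ω | Xm u ω = l ∧ L ω < u ∧ u ≤ C ω} ≠ 0)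
    -- the censoring distribution has no atom at u:
    (hCcont : μ {ω | C ω = u} = 0)
    (α : ℝ)
    -- the partly conditional l → m transition rate at u exists and equals α:
    (hα : Tendsto (fun h : ℝ =>
        (μ ({ω | X (u + h) ω = m} ∩ {ω | Xm u ω = l})).toReal
          / (μ {ω | Xm u ω = l}).toReal / h)
      (nhdsWithin 0 (Set.Ioi 0)) (nhds α)) :
    Tendsto (fun h : ℝ =>
        (μ ({ω | X (u + h) ω = m ∧ u + h ≤ C ω}
              ∩ {ω | Xm u ω = l ∧ L ω < u ∧ u ≤ C ω})).toReal
          / (μ {ω | Xm u ω = l ∧ L ω < u ∧ u ≤ C ω}).toReal / h)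
      (nhdsWithin 0 (Set.Ioi 0)) (nhds α) := by
  set mX := ⨆ v : ℝ, MeasurableSpace.comap (X v) inferInstance
  set D := {ω | Xm u ω = l}
  set E : ℝ → Set Ω := fun t => {ω | L ω < u} ∩ {ω | t ≤ C ω}
  have hfactor : ∀ t s, MeasurableSet[mX] s → μ (E t ∩ s) = μ (E t) * μ s := fun t s hs =>
    (Indep_iff _ _ μ).1 hindep _ s
      ⟨Iio u ×ˢ Ici t, measurableSet_Iio.prod measurableSet_Ici, rfl⟩ hs
  have hD : MeasurableSet[mX] D :=
    measurable_iSup_comap_of_eventually_eq_nhdsLT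
      (fun ω => let ⟨ε, hε, hX⟩ := hXm ω; eventually_of_mem (Ioo_mem_nhdsLT (by linarith)) hX)
      (measurableSet_singleton l)
  have hden : μ {ω | Xm u ω = l ∧ L ω < u ∧ u ≤ C ω} = μ (E u) * μ D := by
    rw [← hfactor u D hD]
    congr 1
    ext ω
    simp only [E, D, mem_inter_iff, mem_ofPred_eq]
    tauto
  have hnum : ∀ h > 0, μ ({ω | X (u + h) ω = m ∧ u + h ≤ C ω}
      ∩ {ω | Xm u ω = l ∧ L ω < u ∧ u ≤ C ω})
        = μ (E (u + h)) * μ ({ω | X (u + h) ω = m} ∩ D) := by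
    intro h hh
    rw [← hfactor (u + h) ({ω | X (u + h) ω = m} ∩ D)
      ((measurable_iSup_comap X _ (measurableSet_singleton m)).inter hD)]
    congr 1
    ext ω
    simp only [E, D, mem_inter_iff, mem_ofPred_eq]
    grind
  have hproduct := (tendsto_measure_inter_add_le_div_nhdsGT μ _ hCcont
    (left_ne_zero_of_mul (hden ▸ hpos))).mul hα
  rw [one_mul] at hproduct
  refine hproduct.congr' ?_
  filter_upwards [self_mem_nhdsWithin] with h hh
  rw [hnum h hh, hden, ENNReal.toReal_mul, ENNReal.toReal_mul]
  ring

/-- Under random left-truncation by `L` and right-censoring by `C` (with `(L,C)`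
independent of the multi-state process `X`), the conditional rate of an observed
`l → m` transition given being under observation and in the transient state `l` just
before time `u` equals the partly conditional transition rate `α_{lm}(u)`:
`Q(dN(u)=1 | Y(u)=1) = P(X(u+du)=m | X(u−)=l)`.  Because the at-risk event is contained
in the study-entry event `Z`, conditioning under `Q = P(·|Z)` reduces to conditioning
under `P`, and the statement is rendered as equality of the limits of the conditional
probabilities divided by the bandwidth `h ↓ 0`. -/
theorem observed_rate_eq_partly_conditional_rate
    {Ω : Type*} {m0 : MeasurableSpace Ω} (μ : Measure Ω) [IsProbabilityMeasure μ]
    {S : ℕ} (X Xm : ℝ → Ω → Fin (S + 1))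
    (L C : Ω → ℝ) (Z : Set Ω)
    (u : ℝ) (hu : 0 < u)
    (l m : Fin (S + 1)) (hlm : l ≠ m)
    (hmeas : ∀ v, Measurable (X v))
    (hLC : Measurable fun ω => (L ω, C ω))
    -- Xm u is the left limit of v ↦ X v at u:
    (hXm : ∀ ω, ∃ ε > (0:ℝ), ∀ v ∈ Set.Ioo (u - ε) u, X v ω = Xm u ω)
    -- (L, C) is independent of the multi-state process:
    (hindep : Indep (MeasurableSpace.comap (fun ω => (L ω, C ω)) inferInstance)
        (⨆ v : ℝ, MeasurableSpace.comap (X v) inferInstance) μ)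
    -- state l is transient: being at risk in l at u implies study entry:
    (hsub : {ω | Xm u ω = l ∧ L ω < u ∧ u ≤ C ω} ⊆ Z)
    (hpos : μ {ω | Xm u ω = l ∧ L ω < u ∧ u ≤ C ω} ≠ 0)
    (hpos' : μ {ω | Xm u ω = l} ≠ 0)
    -- the censoring distribution has no atom at u:
    (hCcont : μ {ω | C ω = u} = 0)
    (α : ℝ)
    -- the partly conditional l → m transition rate at u exists and equals α:
    (hα : Tendsto (fun h : ℝ =>
        (μ ({ω | X (u + h) ω = m} ∩ {ω | Xm u ω = l})).toReal
          / (μ {ω | Xm u ω = l}).toReal / h)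
      (nhdsWithin 0 (Set.Ioi 0)) (nhds α)) :
    Tendsto (fun h : ℝ =>
        (μ ({ω | X (u + h) ω = m ∧ u + h ≤ C ω}
              ∩ {ω | Xm u ω = l ∧ L ω < u ∧ u ≤ C ω})).toReal
          / (μ {ω | Xm u ω = l ∧ L ω < u ∧ u ≤ C ω}).toReal / h)
      (nhdsWithin 0 (Set.Ioi 0)) (nhds α) :=
  observed_rate_eq_partly_conditional_rate_general (m0 := m0) μ X Xm L C u l m hXm hindep hpos
    hCcont α hα
end
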